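/- arXiv:0704.0402 — 2 statements merged into one kernel-verified Lean document; each statement's English description precedes it below -/
import Mathlib

section
/- Let 2 ≤ m < N be real numbers and let f : ℝ → ℝ be continuous with f(t) = 0 for t ≤ 0, and suppose there exist constants C > 0, δ > 0, t₀ > 0 such that 0 ≤ f(t) ≤ C·t^(m−1+δ) for all 0 < t ≤ t₀. Let w : (0,∞) → ℝ be continuously differentiable with w(r) > 0 and w′(r) < 0 for all r > 0 and w(r) → 0 as r → ∞, and suppose that for every r > 0 the function ρ ↦ ρ^(N−1)·|w′(ρ)|^(m−2)·w′(ρ) is differentiable at r with derivative equal to r^(N−1)·(w(r)^(m−1) − f(w(r))). Then lim_{r→∞} w′(r)/w(r) = −(1/(m−1))^(1/m). -/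
/-!
Put `Y = (-w'/w)^(m-1)` and `P = m/(m-1)`. Since `w' < 0`, the radial equation becomes the
Riccati-type equation `Y' = (m-1) Y^P - 1 + f(w)/w^(m-1) - (N-1) Y / r`, whose forcing term
`f(w)/w^(m-1)` is nonnegative and tends to `0` because `f(t) = O(t^(m-1+δ))` and `w → 0`.
If `Y` sits below the root `y*` of `(m-1) y^P = 1` at a late time, then `Y' < -c` as long as
`Y` stays there, so `Y` reaches `0`; if it sits above `y*`, then `Y' ≥ κ Y^P` with `P > 1`, so
`Y^(1-P)` decreases linearly and `Y` blows up in finite time. Hence `Y → y*`, which gives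
`w'/w → -y*^(1/(m-1)) = -(1/(m-1))^(1/m)`.
-/

open Real Filter Topology Set

theorem le_sub_mul_of_hasDerivAt_lt {y y' : ℝ → ℝ} {r₁ a c : ℝ} (hc : 0 ≤ c)
    (hd : ∀ r ≥ r₁, HasDerivAt y (y' r) r) (h₁ : y r₁ ≤ a)
    (h : ∀ r ≥ r₁, y r ≤ a → y' r < -c) :
    ∀ r ≥ r₁, y r ≤ y r₁ - c * (r - r₁) := by
  intro r hr
  refine image_le_of_deriv_right_lt_deriv_boundary (a := r₁) (b := r)
    (fun x hx => (hd x hx.1).continuousAt.continuousWithinAt)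
    (fun x hx => (hd x hx.1).hasDerivWithinAt) (B := fun x => y r₁ - c * (x - r₁))
    (B' := fun _ => -c) (by simp)
    (fun x => by simpa using (((hasDerivAt_id x).sub_const r₁).const_mul c).const_sub (y r₁))
    (fun x hx hyx => h x hx.1 ?_) ⟨hr, le_rfl⟩
  have : 0 ≤ c * (x - r₁) := mul_nonneg hc (sub_nonneg.2 hx.1)
  linarith

theorem exists_neg_of_hasDerivAt_lt {y y' : ℝ → ℝ} {r₁ a c : ℝ} (hc : 0 < c)
    (hd : ∀ r ≥ r₁, HasDerivAt y (y' r) r) (h₁ : y r₁ ≤ a)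
    (h : ∀ r ≥ r₁, y r ≤ a → y' r < -c) :
    ∃ r ≥ r₁, y r < 0 := by
  set r := r₁ + (|y r₁| + 1) / c
  have hr : r₁ ≤ r := le_add_of_nonneg_right (by positivity)
  refine ⟨r, hr, ?_⟩
  have hcr : c * (r - r₁) = |y r₁| + 1 := by simp only [r]; field_simp; ring
  have := le_sub_mul_of_hasDerivAt_lt hc.le hd h₁ h r hr
  linarith [le_abs_self (y r₁)]

theorem false_of_hasDerivAt_ge_mul_rpow {y y' : ℝ → ℝ} {r₁ b κ P : ℝ} (hP : 1 < P)
    (hb : 0 < b) (hκ : 0 < κ) (hd : ∀ r ≥ r₁, HasDerivAt y (y' r) r) (h₁ : b ≤ y r₁)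
    (h : ∀ r ≥ r₁, b ≤ y r → κ * y r ^ P ≤ y' r) : False := by
  have hstay : ∀ r ≥ r₁, b ≤ y r := by
    intro r hr
    have hmono := le_sub_mul_of_hasDerivAt_lt (y := fun r => -y r) (a := -b) le_rfl
      (fun r hr => (hd r hr).neg) (neg_le_neg h₁) (fun r hr hyr => by
        have hyr : b ≤ y r := neg_le_neg_iff.1 hyr
        have := mul_pos hκ (rpow_pos_of_pos (hb.trans_le hyr) P)
        linarith [h r hr hyr]) r hr
    linarith
  -- `y ^ (1 - P)` decreases at least linearly while staying positive.
  have hdecay : ∀ r ≥ r₁,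
      HasDerivAt (fun r => y r ^ (1 - P)) (y' r * (1 - P) * y r ^ (1 - P - 1)) r :=
    fun r hr => (hd r hr).rpow_const (Or.inl (hb.trans_le (hstay r hr)).ne')
  obtain ⟨r, hr, hneg⟩ := exists_neg_of_hasDerivAt_lt (c := (P - 1) * κ / 2)
    (a := y r₁ ^ (1 - P)) (by nlinarith) hdecay le_rfl fun r hr _ => by
      have hy := hb.trans_le (hstay r hr)
      have hyP : y r ^ (1 - P - 1) = (y r ^ P)⁻¹ := by
        rw [show 1 - P - 1 = -P by ring, rpow_neg hy.le]
      have hpos : 0 < y r ^ P := rpow_pos_of_pos hy _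
      calc y' r * (1 - P) * y r ^ (1 - P - 1)
          ≤ κ * y r ^ P * (1 - P) * (y r ^ P)⁻¹ := by
            rw [hyP]; gcongr ?_ * _
            exact mul_le_mul_of_nonpos_right (h r hr (hstay r hr)) (by linarith)
        _ = -((P - 1) * κ) := by field_simp; ring
        _ < -((P - 1) * κ / 2) := by nlinarith
  exact (rpow_pos_of_pos (hb.trans_le (hstay r hr)) _).not_gt hneg

section Riccati

variable {k P ν : ℝ} {Y g : ℝ → ℝ}

theorem eventually_lt_of_hasDerivAt_riccati (hk : 0 ≤ k) (hP : 0 ≤ P) (hν : 0 ≤ ν)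
    (hY : ∀ r > 0, HasDerivAt Y (k * Y r ^ P - 1 + g r - ν * Y r / r) r)
    (hY_pos : ∀ r > 0, 0 < Y r) (hg : Tendsto g atTop (𝓝 0))
    {a : ℝ} (ha : k * a ^ P < 1) : ∀ᶠ r in atTop, a < Y r := by
  set c := (1 - k * a ^ P) / 2
  have hc : 0 < c := by simp only [c]; linarith
  obtain ⟨R, hR⟩ := eventually_atTop.1
    ((hg.eventually (gt_mem_nhds hc)).and (eventually_gt_atTop 0))
  filter_upwards [eventually_ge_atTop R] with r₁ hr₁
  by_contra! hY₁
  have hr₁_pos := (hR r₁ hr₁).2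
  obtain ⟨r, hr, hneg⟩ := exists_neg_of_hasDerivAt_lt hc
    (fun r hr => hY r (hr₁_pos.trans_le hr)) hY₁ fun r hr hYr => by
      obtain ⟨hgr, hr_pos⟩ := hR r (hr₁.trans hr)
      have hYa : k * Y r ^ P ≤ k * a ^ P := by
        gcongr
        exact (hY_pos r hr_pos).le
      have : 0 ≤ ν * Y r / r := by have := hY_pos r hr_pos; positivity
      simp only [c] at hgr ⊢
      linarith
  exact (hY_pos r (hr₁_pos.trans_le hr)).not_gt hneg

theorem eventually_gt_of_hasDerivAt_riccati (hP : 1 < P)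
    (hY : ∀ r > 0, HasDerivAt Y (k * Y r ^ P - 1 + g r - ν * Y r / r) r)
    (hg : ∀ᶠ r in atTop, 0 ≤ g r) {b : ℝ} (hb₀ : 0 < b) (hb : 1 < k * b ^ P) :
    ∀ᶠ r in atTop, Y r < b := by
  have hbP : 0 < b ^ P := rpow_pos_of_pos hb₀ _
  have hbP₁ : 0 < b ^ (P - 1) := rpow_pos_of_pos hb₀ _
  set κ := (k - 1 / b ^ P) / 2
  have hκ : 0 < κ := by
    have : 1 / b ^ P < k := by rw [div_lt_iff₀ hbP]; linarith
    simp only [κ]; linarith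
  obtain ⟨R, hR⟩ := eventually_atTop.1
    (hg.and ((eventually_ge_atTop (ν / (κ * b ^ (P - 1)))).and (eventually_gt_atTop 0)))
  filter_upwards [eventually_ge_atTop R] with r₁ hr₁
  by_contra! hY₁
  have hr₁_pos := (hR r₁ hr₁).2.2
  refine false_of_hasDerivAt_ge_mul_rpow hP hb₀ hκ (fun r hr => hY r (hr₁_pos.trans_le hr))
    hY₁ fun r hr hbY => ?_
  obtain ⟨hgr, hrν, hr_pos⟩ := hR r (hr₁.trans hr)
  have hY_pos := hb₀.trans_le hbY
  -- Above `b`, both `1` and `Y` are dominated by multiples of `Y ^ P`.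
  have hone : 1 ≤ 1 / b ^ P * Y r ^ P := by
    rw [div_mul_eq_mul_div, one_mul, one_le_div hbP]; gcongr
  have hlin : b ^ (P - 1) * Y r ≤ Y r ^ P := by
    calc b ^ (P - 1) * Y r ≤ Y r ^ (P - 1) * Y r := by gcongr
      _ = Y r ^ P := by rw [← rpow_add_one hY_pos.ne', sub_add_cancel]
  have hν' : ν ≤ r * (κ * b ^ (P - 1)) := (div_le_iff₀ (by positivity)).1 hrν
  have hdrift : ν * Y r / r ≤ κ * Y r ^ P := by
    rw [div_le_iff₀ hr_pos]
    calc ν * Y r ≤ r * κ * (b ^ (P - 1) * Y r) := by nlinarith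
      _ ≤ r * κ * Y r ^ P := by gcongr
      _ = κ * Y r ^ P * r := by ring
  have : 1 / b ^ P * Y r ^ P = (k - 2 * κ) * Y r ^ P := by simp only [κ]; ring
  nlinarith

theorem tendsto_of_hasDerivAt_riccati (hk : 0 < k) (hP : 1 < P) (hν : 0 ≤ ν)
    (hY : ∀ r > 0, HasDerivAt Y (k * Y r ^ P - 1 + g r - ν * Y r / r) r)
    (hY_pos : ∀ r > 0, 0 < Y r) (hg : Tendsto g atTop (𝓝 0))
    (hg_nonneg : ∀ᶠ r in atTop, 0 ≤ g r) : Tendsto Y atTop (𝓝 (k⁻¹ ^ P⁻¹)) := by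
  have hk' : 0 < k⁻¹ := inv_pos.2 hk
  have hstar : 0 < k⁻¹ ^ P⁻¹ := rpow_pos_of_pos hk' _
  have hstarP : k * (k⁻¹ ^ P⁻¹) ^ P = 1 := by
    rw [rpow_inv_rpow hk'.le (by linarith), mul_inv_cancel₀ hk.ne']
  refine tendsto_order.2 ⟨fun a ha => ?_, fun b hb => ?_⟩
  · rcases le_or_gt a 0 with ha₀ | ha₀
    · filter_upwards [eventually_gt_atTop 0] with r hr using ha₀.trans_lt (hY_pos r hr)
    refine eventually_lt_of_hasDerivAt_riccati hk.le (by linarith) hν hY hY_pos hg ?_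
    rw [← hstarP]; gcongr
  · refine eventually_gt_of_hasDerivAt_riccati hP hY hg_nonneg (hstar.trans hb) ?_
    rw [← hstarP]; gcongr

end Riccati

theorem tendsto_div_rpow_nhdsGT_zero {f : ℝ → ℝ} {p δ C t₀ : ℝ} (hδ : 0 < δ)
    (ht₀ : 0 < t₀) (hf : ∀ t, 0 < t → t ≤ t₀ → 0 ≤ f t ∧ f t ≤ C * t ^ (p + δ)) :
    Tendsto (fun t => f t / t ^ p) (𝓝[>] 0) (𝓝 0) := by
  have hupper : Tendsto (fun t : ℝ => C * t ^ δ) (𝓝[>] 0) (𝓝 0) := by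
    have := ((continuousAt_rpow_const 0 δ (Or.inr hδ.le)).tendsto.const_mul C).mono_left
      (nhdsWithin_le_nhds (s := Ioi 0))
    rwa [zero_rpow hδ.ne', mul_zero] at this
  have hsmall : ∀ᶠ t in 𝓝[>] (0 : ℝ), t ∈ Ioc 0 t₀ := Ioc_mem_nhdsGT ht₀
  refine tendsto_of_tendsto_of_tendsto_of_le_of_le' tendsto_const_nhds hupper ?_ ?_
  · filter_upwards [hsmall] with t ht
    exact div_nonneg (hf t ht.1 ht.2).1 (rpow_nonneg ht.1.le _)
  · filter_upwards [hsmall] with t ht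
    rw [div_le_iff₀ (rpow_pos_of_pos ht.1 _), mul_assoc, ← rpow_add ht.1, add_comm]
    exact (hf t ht.1 ht.2).2

theorem hasDerivAt_of_hasDerivAt_rpow_mul {q : ℝ → ℝ} {q' ν r : ℝ} (hr : 0 < r)
    (h : HasDerivAt (fun ρ => ρ ^ ν * q ρ) (r ^ ν * q') r) :
    HasDerivAt q (q' - ν * q r / r) r := by
  have hrν : r ^ ν ≠ 0 := (rpow_pos_of_pos hr _).ne'
  have hq : (fun ρ => ρ ^ ν * q ρ / ρ ^ ν) =ᶠ[𝓝 r] q := by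
    filter_upwards [Ioi_mem_nhds hr] with ρ hρ
    exact mul_div_cancel_left₀ _ (rpow_pos_of_pos hρ _).ne'
  refine ((h.div (hasDerivAt_rpow_const (Or.inl hr.ne')) hrν).congr_of_eventuallyEq
    hq.symm).congr_deriv ?_
  rw [rpow_sub_one hr.ne']
  field_simp

theorem hasDerivAt_rpow_neg_div_of_radial {m N : ℝ} {f w w' : ℝ → ℝ} {r : ℝ} (hm : 1 < m)
    (hr : 0 < r) (hw : HasDerivAt w (w' r) r) (hw_pos : ∀ ρ > 0, 0 < w ρ)
    (hw'_neg : ∀ ρ > 0, w' ρ < 0)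
    (hODE : HasDerivAt (fun ρ : ℝ => ρ ^ (N - 1) * |w' ρ| ^ (m - 2) * w' ρ)
      (r ^ (N - 1) * (w r ^ (m - 1) - f (w r))) r) :
    HasDerivAt (fun ρ => (-w' ρ / w ρ) ^ (m - 1))
      ((m - 1) * ((-w' r / w r) ^ (m - 1)) ^ (m / (m - 1)) - 1 + f (w r) / w r ^ (m - 1)
        - (N - 1) * (-w' r / w r) ^ (m - 1) / r) r := by
  have hflux : HasDerivAt (fun ρ => ρ ^ (N - 1) * (-w' ρ) ^ (m - 1))
      (r ^ (N - 1) * (f (w r) - w r ^ (m - 1))) r := by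
    refine hODE.neg.congr_of_eventuallyEq ?_ |>.congr_deriv (by ring)
    filter_upwards [Ioi_mem_nhds hr] with ρ hρ
    show _ = -(ρ ^ (N - 1) * |w' ρ| ^ (m - 2) * w' ρ)
    have hw'ρ := neg_pos.2 (hw'_neg ρ hρ)
    rw [abs_of_neg (hw'_neg ρ hρ), show m - 1 = m - 2 + 1 by ring, rpow_add_one hw'ρ.ne']
    ring
  have hq := hasDerivAt_of_hasDerivAt_rpow_mul hr hflux
  have hW : HasDerivAt (fun ρ => w ρ ^ (m - 1)) (w' r * (m - 1) * w r ^ (m - 1 - 1)) r :=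
    hw.rpow_const (Or.inl (hw_pos r hr).ne')
  have hY : (fun ρ => (-w' ρ) ^ (m - 1) / w ρ ^ (m - 1)) =ᶠ[𝓝 r]
      fun ρ => (-w' ρ / w ρ) ^ (m - 1) := by
    filter_upwards [Ioi_mem_nhds hr] with ρ hρ
    exact (div_rpow (neg_pos.2 (hw'_neg ρ hρ)).le (hw_pos ρ hρ).le _).symm
  refine ((hq.div hW (rpow_pos_of_pos (hw_pos r hr) _).ne').congr_of_eventuallyEq
    hY.symm).congr_deriv ?_
  have hm₁ : m - 1 ≠ 0 := by linarith
  have ha := hw_pos r hr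
  have hb := neg_pos.2 (hw'_neg r hr)
  have hratio : ((-w' r / w r) ^ (m - 1)) ^ (m / (m - 1))
      = (-w' r) ^ (m - 1) / w r ^ (m - 1) * (-w' r / w r) := by
    rw [← rpow_mul (div_pos hb ha).le, show (m - 1) * (m / (m - 1)) = m - 1 + 1 by
      field_simp; ring, rpow_add_one (div_pos hb ha).ne', div_rpow hb.le ha.le]
  rw [hratio, div_rpow hb.le ha.le, rpow_sub_one ha.ne' (m - 1)]
  have hW₀ : w r ^ (m - 1) ≠ 0 := (rpow_pos_of_pos ha _).ne'
  generalize w r ^ (m - 1) = W at hW₀ ⊢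
  generalize (-w' r) ^ (m - 1) = Q
  field_simp
  ring

theorem stmt_0_general (m N : ℝ) (hm : 2 ≤ m) (hmN : m < N)
    (f : ℝ → ℝ)
    (C δ t₀ : ℝ) (hδ : 0 < δ) (ht₀ : 0 < t₀)
    (hf_bound : ∀ t : ℝ, 0 < t → t ≤ t₀ → 0 ≤ f t ∧ f t ≤ C * t ^ (m - 1 + δ))
    (w w' : ℝ → ℝ)
    (hw_deriv : ∀ r > (0:ℝ), HasDerivAt w (w' r) r)
    (hw_pos : ∀ r > (0:ℝ), 0 < w r)
    (hw'_neg : ∀ r > (0:ℝ), w' r < 0)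
    (hw_lim : Tendsto w atTop (𝓝 0))
    (hODE : ∀ r > (0:ℝ),
      HasDerivAt (fun ρ : ℝ => ρ ^ (N - 1) * |w' ρ| ^ (m - 2) * w' ρ)
        (r ^ (N - 1) * ((w r) ^ (m - 1) - f (w r))) r) :
    Tendsto (fun r => w' r / w r) atTop (𝓝 (-(1 / (m - 1)) ^ (1 / m))) := by
  have hm₁ : 0 < m - 1 := by linarith
  have hw_nhdsGT : Tendsto w atTop (𝓝[>] 0) := tendsto_nhdsWithin_iff.2
    ⟨hw_lim, eventually_atTop.2 ⟨1, fun r hr => hw_pos r (by linarith)⟩⟩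
  have hg := (tendsto_div_rpow_nhdsGT_zero hδ ht₀ hf_bound).comp hw_nhdsGT
  have hg_nonneg : ∀ᶠ r in atTop, 0 ≤ f (w r) / w r ^ (m - 1) := by
    filter_upwards [hw_nhdsGT.eventually (Ioc_mem_nhdsGT ht₀)] with r hr
    exact div_nonneg (hf_bound _ hr.1 hr.2).1 (rpow_nonneg hr.1.le _)
  have hratio_pos : ∀ r > 0, 0 < -w' r / w r := fun r hr =>
    div_pos (neg_pos.2 (hw'_neg r hr)) (hw_pos r hr)
  have hY_lim := tendsto_of_hasDerivAt_riccati hm₁ ((one_lt_div hm₁).2 (by linarith))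
    (by linarith) (fun r hr => hasDerivAt_rpow_neg_div_of_radial (by linarith) hr
      (hw_deriv r hr) hw_pos hw'_neg (hODE r hr))
    (fun r hr => rpow_pos_of_pos (hratio_pos r hr) _) hg hg_nonneg
  have hlim := (hY_lim.rpow_const (p := (m - 1)⁻¹)
    (Or.inl (rpow_pos_of_pos (inv_pos.2 hm₁) _).ne')).neg
  rw [← rpow_mul (inv_nonneg.2 hm₁.le),
    show (m / (m - 1))⁻¹ * (m - 1)⁻¹ = 1 / m by field_simp] at hlim
  rw [one_div (m - 1)]
  refine hlim.congr' ?_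
  filter_upwards [eventually_gt_atTop 0] with r hr
  rw [rpow_rpow_inv (hratio_pos r hr).le hm₁.ne', neg_div, neg_neg]

/-- Proposition 1(ii), decay of the logarithmic derivative of a radial ground state of
`Δ_m w - w^(m-1) + f(w) = 0` in `ℝ^N`. -/
theorem stmt_0 (m N : ℝ) (hm : 2 ≤ m) (hmN : m < N)
    (f : ℝ → ℝ) (hf_cont : Continuous f) (hf_zero : ∀ t ≤ (0:ℝ), f t = 0)
    (C δ t₀ : ℝ) (hC : 0 < C) (hδ : 0 < δ) (ht₀ : 0 < t₀)
    (hf_bound : ∀ t : ℝ, 0 < t → t ≤ t₀ → 0 ≤ f t ∧ f t ≤ C * t ^ (m - 1 + δ))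
    (w w' : ℝ → ℝ)
    (hw_deriv : ∀ r > (0:ℝ), HasDerivAt w (w' r) r)
    (hw'_cont : ContinuousOn w' (Ioi 0))
    (hw_pos : ∀ r > (0:ℝ), 0 < w r)
    (hw'_neg : ∀ r > (0:ℝ), w' r < 0)
    (hw_lim : Tendsto w atTop (𝓝 0))
    (hODE : ∀ r > (0:ℝ),
      HasDerivAt (fun ρ : ℝ => ρ ^ (N - 1) * |w' ρ| ^ (m - 2) * w' ρ)
        (r ^ (N - 1) * ((w r) ^ (m - 1) - f (w r))) r) :
    Tendsto (fun r => w' r / w r) atTop (𝓝 (-(1 / (m - 1)) ^ (1 / m))) :=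
  stmt_0_general m N hm hmN f C δ t₀ hδ ht₀ hf_bound w w' hw_deriv hw_pos hw'_neg hw_lim hODE
end

section
/- Let m ≥ 2 and p be real numbers with m − 1 < p. Then the function g(u) = ((m−1)·u^(m−1) − p·u^p) / (u^(m−1) − u^p) is non-increasing on (1, ∞). -/
open Real Set

lemma div_rpow_sub_rpow_eq (a p : ℝ) {u : ℝ} (hu : 0 < u) (hne : u ^ (p - a) ≠ 1) :
    (a * u ^ a - p * u ^ p) / (u ^ a - u ^ p) = p + (p - a) / (u ^ (p - a) - 1) := by
  have hsplit : u ^ p = u ^ a * u ^ (p - a) := by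
    rw [← rpow_add hu, add_sub_cancel]
  have hua : u ^ a ≠ 0 := (rpow_pos_of_pos hu a).ne'
  have hsub : u ^ (p - a) - 1 ≠ 0 := sub_ne_zero.mpr hne
  have hden : u ^ a - u ^ p ≠ 0 := by
    rw [hsplit, ← mul_one_sub]
    exact mul_ne_zero hua fun h => hsub (by linarith)
  rw [div_eq_iff hden, hsplit]
  field_simp
  ring

lemma antitoneOn_div_rpow_sub_one {c d : ℝ} (hc : 0 ≤ c) (hd : 0 < d) :
    AntitoneOn (fun u : ℝ => c / (u ^ d - 1)) (Ioi 1) := by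
  intro x hx y _ hxy
  have hx_pos : 0 < x ^ d - 1 := sub_pos.mpr (one_lt_rpow hx hd)
  have hxy_pow : x ^ d ≤ y ^ d := rpow_le_rpow (zero_le_one.trans hx.le) hxy hd.le
  exact div_le_div_of_nonneg_left hc hx_pos (by linarith)

theorem stmt_15_general (m p : ℝ) (hp : m - 1 < p) :
    AntitoneOn (fun u : ℝ => ((m - 1) * u ^ (m - 1) - p * u ^ p) / (u ^ (m - 1) - u ^ p))
      (Ioi 1) := by
  have hd : 0 < p - (m - 1) := sub_pos.mpr hp
  refine AntitoneOn.congr (f₁ := fun u => p + (p - (m - 1)) / (u ^ (p - (m - 1)) - 1)) ?_ ?_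
  · exact fun x hx y hy hxy => add_le_add_right (antitoneOn_div_rpow_sub_one hd.le hd hx hy hxy) p
  · intro u hu
    exact (div_rpow_sub_rpow_eq (m - 1) p (zero_lt_one.trans hu) (one_lt_rpow hu hd).ne').symm

/-- Remark 1: for `f(t) = t^p` with `m - 1 < p`, the function
`g(u) = ((m-1) u^(m-1) - p u^p)/(u^(m-1) - u^p)` of hypothesis (H5) is non-increasing
on `(1, ∞)`. -/
theorem stmt_15 (m p : ℝ) (hm : 2 ≤ m) (hp : m - 1 < p) :
    AntitoneOn (fun u : ℝ => ((m - 1) * u ^ (m - 1) - p * u ^ p) / (u ^ (m - 1) - u ^ p))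
      (Ioi 1) :=
  stmt_15_general m p hp
end
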